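/- Let $m \ge 4$ and $d \ge 2$ be integers with $\sqrt{m/2} \le d \le m/2$. Consider the monomial ideals $M = (x^{2m+1-d}, y^{m+2d-1}, z^{m+2d-1}, x y^{m-1} z)^2$, $P = (x^{2m}, y^{2m})$, and $Q = (z^2)$ in $k[x,y,z]$. Then $M^t \subseteq P^t + Q^t$ if and only if $t \equiv d \pmod{m}$. -/

import Mathlib

/-!
Every ideal involved is a monomial ideal, so `M ^ t ⊆ P ^ t + Q ^ t` says that each product
`x^{(2m+1-d)a+e} y^{(m+2d-1)b+(m-1)e} z^{(m+2d-1)c+e}` with `a + b + c + e = 2t` is divisible by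
`z^{2t}` or by some `x^{2mi} y^{2m(t-i)}`. Writing `t = mq + r` with `0 ≤ r < m`, the second
alternative amounts to `⌊u/2m⌋ + ⌊v/2m⌋ ≥ 0` for `u = 2r - (da + b + c)` and
`v = (m+1)a + 2db - (m-1)c - 2r`, i.e. to the interval `[-u, v]` containing a multiple of `2m`.
For `r = d` this holds whenever the `z`-alternative fails (the bounds `√(m/2) ≤ d ≤ m/2` are
what make the interval long enough), and for `r ≠ d` one of the products with `a + b ≤ 2`,
`c = 0` violates it.
-/

open MvPolynomial

theorem Ideal.span_range_pow {R ι : Type*} [CommSemiring R] [Fintype ι] (g : ι → R) (n : ℕ) :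
    Ideal.span (Set.range g) ^ n =
      Ideal.span ((fun x : ι → ℕ => ∏ i, g i ^ x i) '' {x | ∑ i, x i = n}) := by
  classical
  rw [Ideal.span, Submodule.span_pow, ← Set.image_univ, Finsupp.image_pow_eq_finsuppProd_image]
  congr 1
  ext r
  simp only [Set.mem_image, Set.mem_ofPred_eq, Set.subset_univ, and_true]
  constructor
  · rintro ⟨x, hx, rfl⟩
    exact ⟨x, by simpa [Finsupp.degree_eq_sum] using hx, by simp [Finsupp.prod_fintype]⟩
  · rintro ⟨x, hx, rfl⟩
    refine ⟨Finsupp.equivFunOnFinite.symm x, by simpa [Finsupp.degree_eq_sum] using hx, ?_⟩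
    simp [Finsupp.prod_fintype]

theorem Ideal.span_insert_four_pow_le_iff {R : Type*} [CommSemiring R] (g₀ g₁ g₂ g₃ : R)
    (N : ℕ) (I : Ideal R) :
    Ideal.span {g₀, g₁, g₂, g₃} ^ N ≤ I ↔
      ∀ a b c e : ℕ, a + b + c + e = N → g₀ ^ a * g₁ ^ b * g₂ ^ c * g₃ ^ e ∈ I := by
  have hrange : ({g₀, g₁, g₂, g₃} : Set R) = Set.range ![g₀, g₁, g₂, g₃] := by
    simp only [Matrix.range_cons, Matrix.range_empty, Set.union_empty, Set.singleton_union]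
  rw [hrange, Ideal.span_range_pow, Ideal.span_le, Set.image_subset_iff]
  constructor
  · intro h a b c e hN
    simpa [Fin.prod_univ_four] using @h ![a, b, c, e] (by simpa [Fin.sum_univ_four] using hN)
  · intro h x hx
    simpa [Fin.prod_univ_four] using h _ _ _ _ (by simpa [Fin.sum_univ_four] using hx)

theorem Nat.exists_add_eq_and_mul_le_and_mul_le_iff {n : ℕ} (hn : 0 < n) (t α β : ℕ) :
    (∃ i j, i + j = t ∧ n * i ≤ α ∧ n * j ≤ β) ↔ t ≤ α / n + β / n := by
  simp only [mul_comm n, ← Nat.le_div_iff_mul_le hn]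
  generalize α / n = a, β / n = b
  constructor
  · rintro ⟨i, j, rfl, hi, hj⟩
    omega
  · intro h
    exact ⟨min t a, t - min t a, by omega, by omega, by omega⟩

namespace MvPolynomial

theorem monomial_mem_ideal_span_monomial_image {σ R : Type*} [CommSemiring R] [Nontrivial R]
    {v : σ →₀ ℕ} {S : Set (σ →₀ ℕ)} :
    monomial v (1 : R) ∈ Ideal.span ((fun s => monomial s (1 : R)) '' S) ↔ ∃ s ∈ S, s ≤ v := by
  classical
  simp [mem_ideal_span_monomial_image, support_monomial]

variable {R : Type*} [CommSemiring R]

theorem X_pow_mul_X_pow_mul_X_pow (α β γ : ℕ) :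
    (X 0 ^ α * X 1 ^ β * X 2 ^ γ : MvPolynomial (Fin 3) R) =
      monomial (Finsupp.single 0 α + Finsupp.single 1 β + Finsupp.single 2 γ) 1 := by
  simp only [X_pow_eq_monomial, monomial_mul, one_mul]

theorem span_pair_pow_sup_span_pow (n p t : ℕ) :
    Ideal.span {X 0 ^ n, X 1 ^ n} ^ t ⊔ Ideal.span {X 2 ^ p} ^ t =
      Ideal.span ((fun s => monomial s (1 : R)) ''
        ({s | ∃ i j, i + j = t ∧
            s = Finsupp.single 0 (n * i) + Finsupp.single 1 (n * j) + Finsupp.single 2 0} ∪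
          {Finsupp.single 0 0 + Finsupp.single 1 0 + Finsupp.single (2 : Fin 3) (p * t)})) := by
  have hrange : ({X 0 ^ n, X 1 ^ n} : Set (MvPolynomial (Fin 3) R)) =
      Set.range ![X 0 ^ n, X 1 ^ n] := by
    simp only [Matrix.range_cons, Matrix.range_empty, Set.union_empty, Set.singleton_union]
  apply le_antisymm
  · rw [hrange, Ideal.span_range_pow, Ideal.span_singleton_pow, sup_le_iff, Ideal.span_le,
      Ideal.span_le]
    constructor
    · rintro _ ⟨x, hx, rfl⟩
      refine Ideal.subset_span ⟨_, Or.inl ⟨x 0, x 1, by simpa using hx, rfl⟩, ?_⟩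
      dsimp only
      rw [← X_pow_mul_X_pow_mul_X_pow, pow_zero, mul_one, pow_mul, pow_mul, Fin.prod_univ_two]
      rfl
    · rintro _ rfl
      refine Ideal.subset_span ⟨_, Or.inr rfl, ?_⟩
      dsimp only
      rw [← X_pow_mul_X_pow_mul_X_pow, pow_zero, pow_zero, one_mul, one_mul, pow_mul]
  · rw [Ideal.span_le]
    rintro _ ⟨s, (⟨i, j, rfl, rfl⟩ | rfl), rfl⟩
    · refine Ideal.mem_sup_left ?_
      dsimp only
      rw [← X_pow_mul_X_pow_mul_X_pow, pow_zero, mul_one, pow_mul, pow_mul, pow_add]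
      exact Ideal.mul_mem_mul (Ideal.pow_mem_pow (Ideal.subset_span (by simp)) _)
        (Ideal.pow_mem_pow (Ideal.subset_span (by simp)) _)
    · refine Ideal.mem_sup_right ?_
      dsimp only
      rw [← X_pow_mul_X_pow_mul_X_pow, pow_zero, pow_zero, one_mul, one_mul, pow_mul]
      exact Ideal.pow_mem_pow (Ideal.mem_span_singleton_self _) _

theorem X_pow_mul_mem_span_pair_pow_sup_iff [Nontrivial R] {n : ℕ} (hn : 0 < n)
    (p t α β γ : ℕ) :
    (X 0 ^ α * X 1 ^ β * X 2 ^ γ : MvPolynomial (Fin 3) R) ∈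
        Ideal.span {X 0 ^ n, X 1 ^ n} ^ t ⊔ Ideal.span {X 2 ^ p} ^ t ↔
      p * t ≤ γ ∨ t ≤ α / n + β / n := by
  rw [span_pair_pow_sup_span_pow, X_pow_mul_X_pow_mul_X_pow,
    monomial_mem_ideal_span_monomial_image]
  simp [Finsupp.le_def, Fin.forall_fin_succ, Finsupp.single_apply,
    Nat.exists_add_eq_and_mul_le_and_mul_le_iff hn]

theorem span_pow_le_span_pair_pow_sup_iff [Nontrivial R] {n : ℕ} (hn : 0 < n)
    (A B C j p t N : ℕ) :
    Ideal.span {X 0 ^ A, X 1 ^ B, X 2 ^ C, X 0 * X 1 ^ j * X 2} ^ N ≤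
        Ideal.span {(X 0 : MvPolynomial (Fin 3) R) ^ n, X 1 ^ n} ^ t ⊔ Ideal.span {X 2 ^ p} ^ t ↔
      ∀ a b c e, a + b + c + e = N →
        p * t ≤ C * c + e ∨ t ≤ (A * a + e) / n + (B * b + j * e) / n := by
  rw [Ideal.span_insert_four_pow_le_iff]
  refine forall₄_congr fun a b c e => imp_congr_right fun _ => ?_
  rw [← X_pow_mul_mem_span_pair_pow_sup_iff (R := R) hn]
  convert Iff.rfl using 2
  ring

end MvPolynomial

namespace Int

theorem ediv_add_ediv_nonneg_of_neg_le_mul_le {n u v : ℤ} (hn : 0 < n) (k : ℤ)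
    (hu : -u ≤ n * k) (hv : n * k ≤ v) : 0 ≤ u / n + v / n := by
  have hu' : -k ≤ u / n := Int.le_ediv_of_mul_le hn (by linarith)
  have hv' : k ≤ v / n := Int.le_ediv_of_mul_le hn (by linarith)
  linarith

theorem ediv_add_ediv_nonneg_of_sub_one_le_add {n u v : ℤ} (hn : 0 < n) (h : n - 1 ≤ u + v) :
    0 ≤ u / n + v / n := by
  refine ediv_add_ediv_nonneg_of_neg_le_mul_le hn (v / n) ?_ (Int.mul_ediv_self_le hn.ne')
  have := Int.lt_mul_ediv_self_add (x := v) hn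
  linarith

theorem ediv_add_ediv_neg {n u v : ℤ} (hn : 0 < n) (hu : u < 0) (hv : v < n) :
    u / n + v / n < 0 := by
  have hu' : u / n < 0 := Int.ediv_neg_of_neg_of_pos hu hn
  have hv' : v / n < 1 := Int.ediv_lt_of_lt_mul hn (by linarith)
  linarith

end Int

theorem le_div_add_div_iff_ediv_add_ediv_nonneg {m d q r t a b c e : ℕ} (hm : 0 < m)
    (hdm : d ≤ 2 * m + 1) (ht : t = m * q + r) (hsum : a + b + c + e = 2 * t) :
    t ≤ ((2 * m + 1 - d) * a + e) / (2 * m) + ((m + 2 * d - 1) * b + (m - 1) * e) / (2 * m) ↔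
      0 ≤ (2 * r - (d * a + b + c) : ℤ) / (2 * m) +
        ((m + 1) * a + 2 * d * b - (m - 1) * c - 2 * r : ℤ) / (2 * m) := by
  have hn : (2 * m : ℤ) ≠ 0 := by positivity
  have ht' : (t : ℤ) = m * q + r := by exact_mod_cast ht
  have hsum' : (a + b + c + e : ℤ) = 2 * t := by exact_mod_cast hsum
  have hx : (((2 * m + 1 - d) * a + e : ℕ) : ℤ) =
      (2 * r - (d * a + b + c)) + (q + a) * (2 * m) := by
    push_cast [hdm]
    linear_combination hsum' + 2 * ht'
  have hy : (((m + 2 * d - 1) * b + (m - 1) * e : ℕ) : ℤ) =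
      ((m + 1) * a + 2 * d * b - (m - 1) * c - 2 * r) + (t - q - a) * (2 * m) := by
    push_cast [show 1 ≤ m + 2 * d by omega, show 1 ≤ m by omega]
    linear_combination (m - 1) * hsum' - 2 * ht'
  rw [← Int.ofNat_le, Nat.cast_add, Int.natCast_ediv, Int.natCast_ediv, hx, hy]
  push_cast
  rw [Int.add_mul_ediv_right _ _ hn, Int.add_mul_ediv_right _ _ hn]
  constructor <;> intro h <;> linarith

theorem ediv_add_ediv_nonneg_of_residue_eq {m d a b c : ℕ} (hd : 2 ≤ d) (hd1 : m ≤ 2 * d ^ 2)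
    (hd2 : 2 * d ≤ m) (hz : ((m + 2 * d - 2) * c : ℤ) < a + b) :
    0 ≤ (2 * d - (d * a + b + c) : ℤ) / (2 * m) +
      ((m + 1) * a + 2 * d * b - (m - 1) * c - 2 * d : ℤ) / (2 * m) := by
  -- The interval `[-u, v]` has length `(m + 1 - d) a + (2d - 1) b - m c ≥ 2m - 1`, except when
  -- `c = 0` and either `-u ≤ 0 ≤ v` or `(a, b) = (3, 0)`, where `2m` itself lies in it.
  have hn : (0 : ℤ) < 2 * m := by omega
  have hd' : (2 : ℤ) ≤ d := by exact_mod_cast hd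
  have hd1' : (m : ℤ) ≤ 2 * d ^ 2 := by exact_mod_cast hd1
  have hd2' : 2 * (d : ℤ) ≤ m := by exact_mod_cast hd2
  have ha := Int.natCast_nonneg a
  have hb := Int.natCast_nonneg b
  rcases Nat.eq_zero_or_pos c with rfl | hc
  · push_cast at hz ⊢
    rcases le_or_gt (d * a + b : ℤ) (2 * d) with hs | hs
    · refine Int.ediv_add_ediv_nonneg_of_neg_le_mul_le hn 0 (by linarith) ?_
      nlinarith [mul_nonneg (by linarith : (0:ℤ) ≤ m + 1 - 2 * d) ha,
        mul_nonneg (by linarith : (0:ℤ) ≤ d) (by linarith : (0:ℤ) ≤ a + b - 1)]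
    rcases Nat.lt_or_ge a 2 with ha2 | ha2
    · refine Int.ediv_add_ediv_nonneg_of_sub_one_le_add hn ?_
      interval_cases a
      · have hb' : 2 * (d : ℤ) + 1 ≤ b := by push_cast at hs; linarith
        nlinarith [mul_nonneg (by linarith : (0:ℤ) ≤ 2 * d - 1) (sub_nonneg.2 hb')]
      · have hb' : (d : ℤ) + 1 ≤ b := by push_cast at hs; linarith
        nlinarith [mul_nonneg (by linarith : (0:ℤ) ≤ 2 * d - 1) (sub_nonneg.2 hb')]
    rcases Nat.eq_zero_or_pos b with rfl | hb1
    · rcases Nat.lt_or_ge a 4 with ha4 | ha4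
      · interval_cases a
        · push_cast at hs; linarith
        · exact Int.ediv_add_ediv_nonneg_of_neg_le_mul_le hn 1 (by push_cast; linarith)
            (by push_cast; linarith)
      · refine Int.ediv_add_ediv_nonneg_of_sub_one_le_add hn ?_
        have : (4 : ℤ) ≤ a := by exact_mod_cast ha4
        nlinarith
    · refine Int.ediv_add_ediv_nonneg_of_sub_one_le_add hn ?_
      have : (2 : ℤ) ≤ a := by exact_mod_cast ha2
      have : (1 : ℤ) ≤ b := by exact_mod_cast hb1
      nlinarith
  · have hc' : (1 : ℤ) ≤ c := by exact_mod_cast hc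
    refine Int.ediv_add_ediv_nonneg_of_sub_one_le_add hn ?_
    nlinarith [mul_nonneg (sub_nonneg.2 hd2') ha, mul_nonneg (sub_nonneg.2 hd') hb,
      mul_nonneg (sub_nonneg.2 hc') (by linarith : (0:ℤ) ≤ 2 * m + 6 * d - 6)]

theorem exists_ediv_add_ediv_neg_of_residue_ne {m d r : ℕ} (hd : 2 ≤ d) (hd2 : 2 * d ≤ m)
    (hr : r < m) (hrd : r ≠ d) :
    ∃ a b : ℕ, 0 < a + b ∧ a + b ≤ 2 ∧
      (2 * r - (d * a + b) : ℤ) / (2 * m) + ((m + 1) * a + 2 * d * b - 2 * r : ℤ) / (2 * m)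
        < 0 := by
  have hn : (0 : ℤ) < 2 * m := by omega
  rcases lt_or_gt_of_ne hrd with hrd | hrd
  · rcases Nat.lt_or_ge r 2 with hr2 | hr2
    · interval_cases r
      · exact ⟨0, 1, by simp, by simp, Int.ediv_add_ediv_neg hn (by simp) (by push_cast; omega)⟩
      · rcases Nat.lt_or_ge d 3 with hd3 | hd3
        · obtain rfl : d = 2 := by omega
          exact ⟨1, 1, by simp, by simp, Int.ediv_add_ediv_neg hn (by simp) (by push_cast; omega)⟩
        · exact ⟨1, 0, by simp, by simp,
            Int.ediv_add_ediv_neg hn (by push_cast; omega) (by push_cast; omega)⟩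
    · exact ⟨2, 0, by simp, by simp,
        Int.ediv_add_ediv_neg hn (by push_cast; omega) (by push_cast; omega)⟩
  · refine ⟨0, 1, by simp, by simp, ?_⟩
    rw [add_comm]
    exact Int.ediv_add_ediv_neg hn (by push_cast; omega) (by push_cast; omega)

theorem forall_exponents_covered_iff_mod_eq {m d t : ℕ} (hd : 2 ≤ d) (hd1 : m ≤ 2 * d ^ 2)
    (hd2 : 2 * d ≤ m) (ht : 1 ≤ t) :
    (∀ a b c e, a + b + c + e = 2 * t → 2 * t ≤ (m + 2 * d - 1) * c + e ∨
        t ≤ ((2 * m + 1 - d) * a + e) / (2 * m) + ((m + 2 * d - 1) * b + (m - 1) * e) / (2 * m)) ↔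
      t % m = d := by
  have hm : 0 < m := by omega
  have htqr : t = m * (t / m) + t % m := (Nat.div_add_mod t m).symm
  constructor
  · intro h
    by_contra hrd
    obtain ⟨a, b, hab, hab2, hneg⟩ :=
      exists_ediv_add_ediv_neg_of_residue_ne hd hd2 (Nat.mod_lt t hm) hrd
    have hsum : a + b + 0 + (2 * t - a - b) = 2 * t := by omega
    rcases h a b 0 (2 * t - a - b) hsum with hz | hcov
    · omega
    · rw [le_div_add_div_iff_ediv_add_ediv_nonneg hm (by omega) htqr hsum] at hcov
      simp only [Nat.cast_zero, add_zero, mul_zero, sub_zero] at hcov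
      exact absurd hcov (not_le.2 hneg)
  · intro hr a b c e hsum
    rw [or_iff_not_imp_left, le_div_add_div_iff_ediv_add_ediv_nonneg hm (by omega) htqr hsum, hr]
    intro hz
    refine ediv_add_ediv_nonneg_of_residue_eq hd hd1 hd2 ?_
    have hsum' : (a + b + c + e : ℤ) = 2 * t := by exact_mod_cast hsum
    have hz' : ((m + 2 * d - 1 : ℕ) * c + e : ℤ) < 2 * t := by exact_mod_cast not_le.1 hz
    push_cast [show 1 ≤ m + 2 * d by omega] at hz'
    linarith

theorem stmt8_general {k : Type*} [Field k] (m d t : ℕ) (hd : 2 ≤ d)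
    (hd1 : m ≤ 2 * d ^ 2) (hd2 : 2 * d ≤ m) (ht : 1 ≤ t)
    (M P Q : Ideal (MvPolynomial (Fin 3) k))
    (hM : M = (Ideal.span {(X 0 : MvPolynomial (Fin 3) k) ^ (2*m+1-d),
      X 1 ^ (m+2*d-1), X 2 ^ (m+2*d-1), X 0 * X 1 ^ (m-1) * X 2}) ^ 2)
    (hP : P = Ideal.span {(X 0 : MvPolynomial (Fin 3) k) ^ (2*m), X 1 ^ (2*m)})
    (hQ : Q = Ideal.span {(X 2 : MvPolynomial (Fin 3) k) ^ 2}) :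
    M ^ t ≤ P ^ t + Q ^ t ↔ t ≡ d [MOD m] := by
  subst hM hP hQ
  rw [← pow_mul, Submodule.add_eq_sup, span_pow_le_span_pair_pow_sup_iff (by omega : 0 < 2 * m),
    Nat.ModEq, Nat.mod_eq_of_lt (by omega : d < m)]
  exact forall_exponents_covered_iff_mod_eq hd hd1 hd2 ht

/-- **Lemma for periodic symbolic depth functions (general residue `d`).**
Let `m ≥ 4` and `d ≥ 2` with `√(m/2) ≤ d ≤ m/2` (i.e. `m ≤ 2d²` and `2d ≤ m`).
In `k[x,y,z]` with `M = (x^{2m+1-d}, y^{m+2d-1}, z^{m+2d-1}, x y^{m-1} z)^2`,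
`P = (x^{2m}, y^{2m})` and `Q = (z^2)`, one has `M^t ⊆ P^t + Q^t` if and only
if `t ≡ d (mod m)`. -/
theorem stmt8 {k : Type*} [Field k] (m d t : ℕ) (hm : 4 ≤ m) (hd : 2 ≤ d)
    (hd1 : m ≤ 2 * d ^ 2) (hd2 : 2 * d ≤ m) (ht : 1 ≤ t)
    (M P Q : Ideal (MvPolynomial (Fin 3) k))
    (hM : M = (Ideal.span {(X 0 : MvPolynomial (Fin 3) k) ^ (2*m+1-d),
      X 1 ^ (m+2*d-1), X 2 ^ (m+2*d-1), X 0 * X 1 ^ (m-1) * X 2}) ^ 2)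
    (hP : P = Ideal.span {(X 0 : MvPolynomial (Fin 3) k) ^ (2*m), X 1 ^ (2*m)})
    (hQ : Q = Ideal.span {(X 2 : MvPolynomial (Fin 3) k) ^ 2}) :
    M ^ t ≤ P ^ t + Q ^ t ↔ t ≡ d [MOD m] :=
  stmt8_general m d t hd hd1 hd2 ht M P Q hM hP hQ
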